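/- Let p = (p_1,...,p_n) be the unique solution of A_n p = e_n, where A_n is the n×n tridiagonal matrix with diagonal 4 and off-diagonals -1 and e_n the last standard basis vector. Then every entry p_j is strictly positive and the sequence p_1 < p_2 < ... < p_n is strictly increasing. -/

import Mathlib

/-!
The Chebyshev values `u_k = U_k(2)` satisfy `u_{k+1} = 4 u_k - u_{k-1}` with `u_{-1} = 0`, which is
the row equation `4 p_i - p_{i+1} - p_{i-1} = 0` of `triA`. Hence `p_j = u_j / u_{n+1}` solves the
system: only the last row, where the term `u_{n+1}` cut off by the matrix is supplied by the
right-hand side, is inhomogeneous. For `x ≥ 1` the values `U_k(x)` are positive and strictly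
increasing, and the solution is unique because `triA` is strictly diagonally dominant.
-/

/-- The `n × n` tridiagonal matrix with diagonal entries `4` and sub- and
super-diagonal entries `-1`. -/
def triA (n : ℕ) : Matrix (Fin n) (Fin n) ℝ :=
  Matrix.of fun i j =>
    if (i : ℕ) = j then 4
    else if (i : ℕ) + 1 = j ∨ (j : ℕ) + 1 = i then -1
    else 0

namespace Polynomial.Chebyshev

variable {R : Type*} [CommRing R] [LinearOrder R] [IsStrictOrderedRing R] {x : R}

theorem U_eval_pos_and_lt_succ_of_one_le (hx : 1 ≤ x) (n : ℕ) :
    0 < (U R n).eval x ∧ (U R n).eval x < (U R (n + 1 : ℕ)).eval x := by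
  induction n with
  | zero => simpa using (show (1 : R) < 2 * x by linarith)
  | succ n ih =>
    obtain ⟨hpos, hlt⟩ := ih
    have hrec : (U R (n + 1 + 1 : ℕ)).eval x =
        2 * x * (U R (n + 1 : ℕ)).eval x - (U R n).eval x := by
      push_cast
      rw [add_assoc, one_add_one_eq_two, U_add_two]
      simp
    refine ⟨hpos.trans hlt, ?_⟩
    rw [hrec]
    nlinarith

theorem U_eval_pos_of_one_le (hx : 1 ≤ x) (n : ℕ) : 0 < (U R n).eval x :=
  (U_eval_pos_and_lt_succ_of_one_le hx n).1

theorem U_eval_strictMono_of_one_le (hx : 1 ≤ x) : StrictMono fun n : ℕ => (U R n).eval x :=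
  strictMono_nat_of_lt_succ fun n => (U_eval_pos_and_lt_succ_of_one_le hx n).2

end Polynomial.Chebyshev

namespace Fin

variable {m : ℕ}

theorem sum_boole_natCast_eq_le_one {R : Type*} [Semiring R] [PartialOrder R]
    [IsStrictOrderedRing R] (k : ℤ) :
    ∑ j : Fin m, (if (j : ℤ) = k then (1 : R) else 0) ≤ 1 := by
  rw [Finset.sum_boole]
  exact Nat.cast_le_one.mpr <| Finset.card_le_one.mpr fun a ha b hb => by
    simp only [Finset.mem_filter] at ha hb
    exact Fin.ext (by omega)

theorem sum_ite_natCast_eq_of_vanish {M : Type*} [AddCommMonoid M] (f : ℤ → M) (h₀ : f (-1) = 0)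
    (hm : f m = 0) {k : ℤ} (hk₀ : -1 ≤ k) (hkm : k ≤ m) :
    ∑ j : Fin m, (if (j : ℤ) = k then f j else 0) = f k := by
  by_cases hk : 0 ≤ k ∧ k < m
  · rw [Finset.sum_eq_single_of_mem ⟨k.toNat, by omega⟩ (Finset.mem_univ _)]
    · simp [Int.toNat_of_nonneg hk.1]
    · intro j _ hj
      exact if_neg fun h => hj (Fin.ext (by simp only; omega))
  · have hfk : f k = 0 := by
      obtain rfl | rfl : k = -1 ∨ k = m := (by omega)
      exacts [h₀, hm]
    rw [hfk, Finset.sum_eq_zero fun j _ => if_neg (by omega)]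

end Fin

open Matrix Polynomial Chebyshev

section triA

variable {m : ℕ}

theorem triA_apply (i j : Fin m) :
    triA m i j = 4 * (if (j : ℤ) = i then 1 else 0) - (if (j : ℤ) = i + 1 then 1 else 0)
      - (if (j : ℤ) = i - 1 then 1 else 0) := by
  simp only [triA, Matrix.of_apply]
  split_ifs <;> first | omega | norm_num

theorem triA_mulVec_apply_of_vanish (f : ℤ → ℝ) (h₀ : f (-1) = 0) (hm : f m = 0) (i : Fin m) :
    (triA m *ᵥ fun j => f j) i = 4 * f i - f (i + 1) - f (i - 1) := by
  have hsum (k : ℤ) (hk₀ : -1 ≤ k) (hkm : k ≤ m) :=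
    Fin.sum_ite_natCast_eq_of_vanish f h₀ hm hk₀ hkm
  simp only [Matrix.mulVec, dotProduct, triA_apply, sub_mul, Finset.sum_sub_distrib, mul_assoc,
    ← Finset.mul_sum, ite_mul, one_mul, zero_mul]
  rw [hsum i (by omega) (by omega), hsum (i + 1) (by omega) (by omega),
    hsum (i - 1) (by omega) (by omega)]

theorem triA_det_ne_zero : (triA m).det ≠ 0 := by
  refine det_ne_zero_of_sum_row_lt_diag fun k => ?_
  have hoff : ∀ j ∈ Finset.univ.erase k, ‖triA m k j‖ ≤
      (if (j : ℤ) = k + 1 then 1 else 0) + (if (j : ℤ) = k - 1 then 1 else 0) := by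
    intro j hj
    have hjk : (j : ℤ) ≠ k := by simpa [Fin.ext_iff] using Finset.ne_of_mem_erase hj
    rw [triA_apply]
    split_ifs <;> first | omega | norm_num
  calc ∑ j ∈ Finset.univ.erase k, ‖triA m k j‖
      ≤ ∑ j : Fin m, ((if (j : ℤ) = k + 1 then (1 : ℝ) else 0) +
          (if (j : ℤ) = k - 1 then 1 else 0)) :=
        (Finset.sum_le_sum hoff).trans (Finset.sum_le_sum_of_subset_of_nonneg
          (Finset.erase_subset _ _) fun _ _ _ => by positivity)
    _ ≤ 1 + 1 := by
        rw [Finset.sum_add_distrib]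
        exact add_le_add (Fin.sum_boole_natCast_eq_le_one _) (Fin.sum_boole_natCast_eq_le_one _)
    _ < ‖triA m k k‖ := by
        simp only [triA, Matrix.of_apply, ↓reduceIte, Real.norm_ofNat]
        norm_num

theorem triA_mulVec_injective : Function.Injective (triA m *ᵥ ·) :=
  mulVec_injective_iff_isUnit.mpr <| (isUnit_iff_isUnit_det _).mpr triA_det_ne_zero.isUnit

end triA

noncomputable def triASolution (n : ℕ) : Fin (n + 1) → ℝ :=
  fun j => (U ℝ j).eval 2 / (U ℝ (n + 1)).eval 2

theorem triA_mulVec_triASolution (n : ℕ) :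
    triA (n + 1) *ᵥ triASolution n = Pi.single (Fin.last n) 1 := by
  set D := (U ℝ (n + 1)).eval 2
  have hD : D ≠ 0 := (U_eval_pos_of_one_le one_le_two (n + 1)).ne'
  set f : ℤ → ℝ := fun k => if k ≤ n then (U ℝ k).eval 2 else 0
  have hf_le (k : ℤ) (hk : k ≤ n) : f k = (U ℝ k).eval 2 := if_pos hk
  have hf_top : f (n + 1) = 0 := if_neg (by omega)
  have hsol : triASolution n = D⁻¹ • fun j : Fin (n + 1) => f j := by
    ext j
    simp [triASolution, hf_le _ (Int.ofNat_le.mpr j.is_le), D, div_eq_inv_mul]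
  have hrec (k : ℤ) : 4 * (U ℝ k).eval 2 - (U ℝ (k - 1)).eval 2 = (U ℝ (k + 1)).eval 2 := by
    simp only [U_add_one, eval_sub, eval_mul, eval_X, eval_ofNat]
    ring
  ext i
  rw [hsol, mulVec_smul, Pi.smul_apply, smul_eq_mul,
    triA_mulVec_apply_of_vanish f (by rw [hf_le _ (by omega), U_neg_one, eval_zero])
      (mod_cast hf_top),
    hf_le i (by omega), hf_le (i - 1) (by omega)]
  obtain rfl | hi := eq_or_ne i (Fin.last n)
  · rw [Pi.single_eq_same, Fin.val_last, hf_top, sub_zero, hrec, inv_mul_cancel₀ hD]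
  · have : (i : ℕ) < n := Fin.val_lt_last hi
    rw [Pi.single_eq_of_ne hi, hf_le (i + 1) (by omega), sub_right_comm, hrec, sub_self, mul_zero]

theorem triASolution_pos (n : ℕ) (j : Fin (n + 1)) : 0 < triASolution n j :=
  div_pos (U_eval_pos_of_one_le one_le_two _) (U_eval_pos_of_one_le one_le_two _)

theorem triASolution_strictMono (n : ℕ) : StrictMono (triASolution n) := fun _ _ hab =>
  div_lt_div_of_pos_right (U_eval_strictMono_of_one_le one_le_two hab)
    (U_eval_pos_of_one_le one_le_two _)

/-- The solution of `A_n p = e_n` (with `e_n` the last standard basis vector) is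
unique, all its entries are strictly positive, and they are strictly
increasing. -/
theorem triA_solution_pos_strictMono (n : ℕ) :
    (∃! p : Fin (n + 1) → ℝ, (triA (n + 1)).mulVec p = Pi.single (Fin.last n) 1) ∧
    ∀ p : Fin (n + 1) → ℝ, (triA (n + 1)).mulVec p = Pi.single (Fin.last n) 1 →
      (∀ j, 0 < p j) ∧ StrictMono p := by
  have hsol := triA_mulVec_triASolution n
  have huniq (p : Fin (n + 1) → ℝ) (hp : triA (n + 1) *ᵥ p = Pi.single (Fin.last n) 1) :
      p = triASolution n :=
    triA_mulVec_injective (hp.trans hsol.symm)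
  refine ⟨⟨triASolution n, hsol, huniq⟩, fun p hp => ?_⟩
  rw [huniq p hp]
  exact ⟨triASolution_pos n, triASolution_strictMono n⟩
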